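/- Suppose the nonautonomous system (X, f_{0,∞}) is topologically {π_i}-semiconjugate to (Y, g_{0,∞}), where the semiconjugating maps satisfy {π_i}_{i≥0} ⊂ {φ_1,…,φ_k} for some finite set of maps, and each fibre φ_j^{-1}(y) (y ∈ Y, 1 ≤ j ≤ k) has at most n points. Then for any increasing sequence A of nonnegative integers, h_A(g_{0,∞}) ≤ h_A(f_{0,∞}) ≤ h_A(g_{0,∞}) + log(nk). -/

import Mathlib

open Filter Set MeasureTheory

/-- `nacomp f i n = f (i+n-1) ∘ ⋯ ∘ f i`, the `n`-fold composition of the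
nonautonomous system starting at index `i`. -/
def nacomp {X : Type*} (f : ℕ → X → X) (i : ℕ) : ℕ → X → X
  | 0 => id
  | n + 1 => f (i + n) ∘ nacomp f i n

/-- `E` is an `(n, ε, A)`-separated subset of `Λ` for the nonautonomous system `f`. -/
def IsSepSet {X : Type*} [PseudoMetricSpace X] (f : ℕ → X → X) (A : ℕ → ℕ) (n : ℕ)
    (ε : ℝ) (Λ : Set X) (E : Finset X) : Prop :=
  ↑E ⊆ Λ ∧ ∀ x ∈ E, ∀ y ∈ E, x ≠ y →
    ∃ j : Fin n, ε < dist (nacomp f 0 (A j) x) (nacomp f 0 (A j) y)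

/-- `s_n(ε, A, f, Λ)`: maximal cardinality of an `(n,ε,A)`-separated subset of `Λ`. -/
noncomputable def maxSep {X : Type*} [PseudoMetricSpace X] (f : ℕ → X → X) (A : ℕ → ℕ)
    (n : ℕ) (ε : ℝ) (Λ : Set X) : ℕ :=
  sSup {m | ∃ E : Finset X, IsSepSet f A n ε Λ E ∧ E.card = m}

/-- Topological sequence entropy of `f` on `Λ` along `A`, via separated sets:
`lim_{ε → 0} limsup_n (1/n) log s_n(ε,A,f,Λ)`, the limit realized as a supremum over `ε > 0`. -/
noncomputable def sepEnt {X : Type*} [PseudoMetricSpace X] (f : ℕ → X → X) (A : ℕ → ℕ)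
    (Λ : Set X) : EReal :=
  ⨆ ε : {ε : ℝ // 0 < ε},
    limsup (fun n : ℕ => ((Real.log (maxSep f A n ε Λ) / n : ℝ) : EReal)) atTop

/-- A finite open cover of the whole space. -/
def IsFinOpenCover {X : Type*} [TopologicalSpace X] (𝒜 : Finset (Set X)) : Prop :=
  (∀ u ∈ 𝒜, IsOpen u) ∧ ⋃₀ ↑𝒜 = (univ : Set X)

/-- A cell `⋂_j (f_0^{a_j})⁻¹ (u j)` of the join `⋁_{j} f_0^{-a_j} 𝒜`. -/
def seqCell {X : Type*} (f : ℕ → X → X) (A : ℕ → ℕ) (n : ℕ) (u : Fin n → Set X) : Set X :=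
  ⋂ j : Fin n, nacomp f 0 (A j.1) ⁻¹' (u j)

/-- `N((⋁_{j=1}^n f_0^{-a_j} 𝒜)|_Λ)`: the minimal cardinality of a subfamily of the join
cover whose union contains `Λ`. -/
noncomputable def coverN {X : Type*} (f : ℕ → X → X) (A : ℕ → ℕ) (n : ℕ) (Λ : Set X)
    (𝒜 : Finset (Set X)) : ℕ :=
  sInf {m | ∃ S : Finset (Fin n → Set X), (∀ u ∈ S, ∀ j, u j ∈ 𝒜) ∧
    (Λ ⊆ ⋃ u ∈ S, seqCell f A n u) ∧ S.card = m}

/-- `h_A(f, Λ, 𝒜)`, the sequence entropy of `f` on `Λ` relative to the open cover `𝒜`. -/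
noncomputable def coverEntOf {X : Type*} (f : ℕ → X → X) (A : ℕ → ℕ) (Λ : Set X)
    (𝒜 : Finset (Set X)) : EReal :=
  limsup (fun n : ℕ => ((Real.log (coverN f A n Λ 𝒜) / n : ℝ) : EReal)) atTop

/-- `h_A(f, Λ)`: topological sequence entropy via open covers. -/
noncomputable def coverEnt {X : Type*} [TopologicalSpace X] (f : ℕ → X → X) (A : ℕ → ℕ)
    (Λ : Set X) : EReal :=
  ⨆ 𝒜 : {𝒜 : Finset (Set X) // IsFinOpenCover 𝒜}, coverEntOf f A Λ 𝒜

/-- The supremum topological sequence entropy `h*(f) = sup_A h_A(f)`. -/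
noncomputable def supSeqEnt {X : Type*} [PseudoMetricSpace X] (f : ℕ → X → X) : EReal :=
  ⨆ A : {A : ℕ → ℕ // StrictMono A}, sepEnt f A univ

/-- The `n`-th compositions system `f_{0,∞}^n`, whose `k`-th map is `f_{kn}^n`. -/
def compSys {X : Type*} (f : ℕ → X → X) (n : ℕ) : ℕ → X → X :=
  fun k => nacomp f (k * n) n

/-- A finite measurable partition of the space. -/
def IsFinMeasPartition {X : Type*} [MeasurableSpace X] (P : Finset (Set X)) : Prop :=
  (∀ s ∈ P, MeasurableSet s) ∧ ((P : Set (Set X)).PairwiseDisjoint id) ∧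
    ⋃₀ ↑P = (univ : Set X)

/-- `h_{A,μ}(f, P) = limsup (1/n) H_μ(⋁_{j=1}^n f_0^{-a_j} P)`. -/
noncomputable def measSeqEntPart {X : Type*} [MeasurableSpace X] (μ : Measure X)
    (f : ℕ → X → X) (A : ℕ → ℕ) (P : Finset (Set X)) : EReal :=
  limsup (fun n : ℕ =>
    (((∑ u : Fin n → {s // s ∈ P},
        Real.negMulLog (μ (seqCell f A n (fun j => (u j : Set X)))).toReal) / n : ℝ) : EReal))
    atTop

/-- The measure-theoretic sequence entropy `h_{A,μ}(f)`. -/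
noncomputable def measSeqEnt {X : Type*} [MeasurableSpace X] (μ : Measure X)
    (f : ℕ → X → X) (A : ℕ → ℕ) : EReal :=
  ⨆ P : {P : Finset (Set X) // IsFinMeasPartition P}, measSeqEntPart μ f A P

/-- Covering dimension at most `d`: every finite open cover has a finite open refinement
of order at most `d + 1`. -/
def HasCovDimLE (X : Type*) [TopologicalSpace X] (d : ℕ) : Prop :=
  ∀ 𝒜 : Finset (Set X), IsFinOpenCover 𝒜 → ∃ ℬ : Finset (Set X), IsFinOpenCover ℬ ∧
    (∀ v ∈ ℬ, ∃ u ∈ 𝒜, v ⊆ u) ∧ ∀ x : X, ({v : Set X | v ∈ ℬ ∧ x ∈ v}).ncard ≤ d + 1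

/-- The induced nonautonomous system `f̂` on the space of Borel probability measures,
carrying the Lévy–Prokhorov (Prohorov) metric: `f̂ n μ = (f n)_* μ`. -/
noncomputable def inducedSys {X : Type*} [MeasurableSpace X] (f : ℕ → X → X)
    (hf : ∀ n, Measurable (f n)) :
    ℕ → LevyProkhorov (ProbabilityMeasure X) → LevyProkhorov (ProbabilityMeasure X) :=
  fun n μ => (LevyProkhorov.toMeasureEquiv (α := ProbabilityMeasure X)).symm
    (((LevyProkhorov.toMeasureEquiv (α := ProbabilityMeasure X)) μ).map (hf n).aemeasurable)

/-- Multi-sensitivity of a nonautonomous system. -/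
def MultiSensitive {X : Type*} [PseudoMetricSpace X] (f : ℕ → X → X) : Prop :=
  ∃ δ : ℝ, 0 < δ ∧ ∀ (k : ℕ) (V : Fin k → Set X),
    (∀ i, IsOpen (V i)) → (∀ i, (V i).Nonempty) →
      ∃ n : ℕ, 1 ≤ n ∧ ∀ i, δ < Metric.diam (nacomp f 0 n '' V i)

/-! A separated set for `g` lifts through a section of `π 0`, and uniform equicontinuity of the
`π i` keeps the lift separated for `f`; hence `h_A(g) ≤ h_A(f)`.

Conversely, only finitely many maps `π i` occur and each is continuous with fibres of at most `n`
points, so for small `δ` the `π i`-preimage of any closed `δ`-ball is covered by `n` balls of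
radius `ε / 2`. Every point of an `(m, ε)`-separated set for `f` shadows, through `π 0`, a point
of a maximal `(m, δ)`-separated (hence spanning) set for `g`, and at each of the `m` times it is
then confined to one of `n` such balls. Thus `s_m(ε, f) ≤ n ^ m s_m(δ, g)`, and
`h_A(f) ≤ h_A(g) + log n`. -/

open Metric Topology

section SeparatedSets

variable {X : Type*} [PseudoMetricSpace X] {f : ℕ → X → X} {A : ℕ → ℕ} {m : ℕ} {ε : ℝ}
  {Λ : Set X}

lemma isSepSet_empty : IsSepSet f A m ε Λ ∅ :=
  ⟨by simp, by simp⟩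

lemma IsSepSet.insert [DecidableEq X] {E : Finset X} {y : X} (hE : IsSepSet f A m ε Λ E)
    (hy : y ∈ Λ) (hyE : ∀ x ∈ E, ∃ j : Fin m, ε < dist (nacomp f 0 (A j) y) (nacomp f 0 (A j) x)) :
    IsSepSet f A m ε Λ (insert y E) := by
  refine ⟨by rw [Finset.coe_insert]; exact Set.insert_subset hy hE.1, ?_⟩
  simp only [Finset.mem_insert]
  rintro a (rfl | ha) b (rfl | hb) hab
  · exact absurd rfl hab
  · exact hyE b hb
  · obtain ⟨j, hj⟩ := hyE a ha
    exact ⟨j, by rwa [dist_comm]⟩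
  · exact hE.2 a ha b hb hab

lemma IsSepSet.card_le_of_forall_exists_dist_lt {E : Finset X} (hE : IsSepSet f A m ε Λ E)
    (C : Finset (Fin m → X))
    (hC : ∀ x ∈ E, ∃ c ∈ C, ∀ j : Fin m, dist (nacomp f 0 (A j) x) (c j) < ε / 2) :
    E.card ≤ C.card := by
  choose! c hcC hc using hC
  refine Finset.card_le_card_of_injOn c hcC fun x hx x' hx' hxx' => ?_
  by_contra hne
  obtain ⟨j, hj⟩ := hE.2 x hx x' hx' hne
  have h₁ := hc x hx j
  have h₂ := hc x' hx' j
  rw [hxx'] at h₁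
  linarith [dist_triangle_right (nacomp f 0 (A j) x) (nacomp f 0 (A j) x') (c x' j)]

lemma bddAbove_card_isSepSet [CompactSpace X] (hε : 0 < ε) :
    BddAbove {c | ∃ E : Finset X, IsSepSet f A m ε Λ E ∧ E.card = c} := by
  obtain ⟨t, htf, hcov⟩ := totallyBounded_iff.1
    (isCompact_univ (X := Fin m → X)).totallyBounded (ε / 2) (half_pos hε)
  refine ⟨htf.toFinset.card, ?_⟩
  rintro _ ⟨E, hE, rfl⟩
  refine hE.card_le_of_forall_exists_dist_lt _ fun x _ => ?_
  obtain ⟨c, hct, hc⟩ := mem_iUnion₂.1 (hcov (mem_univ fun j : Fin m => nacomp f 0 (A j) x))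
  exact ⟨c, htf.mem_toFinset.2 hct, fun j => (dist_le_pi_dist _ _ j).trans_lt (mem_ball.1 hc)⟩

lemma IsSepSet.card_le_maxSep [CompactSpace X] {E : Finset X} (hE : IsSepSet f A m ε Λ E)
    (hε : 0 < ε) : E.card ≤ maxSep f A m ε Λ :=
  le_csSup (bddAbove_card_isSepSet hε) ⟨E, hE, rfl⟩

lemma maxSep_le {N : ℕ} (h : ∀ E, IsSepSet f A m ε Λ E → E.card ≤ N) :
    maxSep f A m ε Λ ≤ N :=
  csSup_le ⟨0, ∅, isSepSet_empty, rfl⟩ (by rintro _ ⟨E, hE, rfl⟩; exact h E hE)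

lemma exists_isSepSet_card_eq_maxSep [CompactSpace X] (hε : 0 < ε) :
    ∃ E : Finset X, IsSepSet f A m ε Λ E ∧ E.card = maxSep f A m ε Λ :=
  Nat.sSup_mem (s := {c | ∃ E : Finset X, IsSepSet f A m ε Λ E ∧ E.card = c})
    ⟨0, ∅, isSepSet_empty, rfl⟩ (bddAbove_card_isSepSet hε)

lemma exists_card_eq_maxSep_forall_exists_dist_le [CompactSpace X] (hε : 0 < ε) :
    ∃ D : Finset X, D.card = maxSep f A m ε Λ ∧
      ∀ y ∈ Λ, ∃ d ∈ D, ∀ j : Fin m, dist (nacomp f 0 (A j) y) (nacomp f 0 (A j) d) ≤ ε := by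
  classical
  obtain ⟨D, hD, hcard⟩ := exists_isSepSet_card_eq_maxSep (f := f) (A := A) (m := m) (Λ := Λ) hε
  refine ⟨D, hcard, fun y hy => ?_⟩
  by_contra! hfar
  have hyD : y ∉ D := fun hyD => by
    obtain ⟨j, hj⟩ := hfar y hyD
    rw [dist_self] at hj
    linarith
  have := (hD.insert hy hfar).card_le_maxSep hε
  rw [Finset.card_insert_of_notMem hyD, hcard] at this
  omega

end SeparatedSets

lemma nacomp_semiconj {X Y : Type*} {f : ℕ → X → X} {g : ℕ → Y → Y} {π : ℕ → X → Y}
    (hsemi : ∀ i, π (i + 1) ∘ f i = g i ∘ π i) (i m : ℕ) (x : X) :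
    π (i + m) (nacomp f i m x) = nacomp g i m (π i x) := by
  induction m with
  | zero => rfl
  | succ m ih =>
    show π (i + m + 1) (f (i + m) (nacomp f i m x)) = g (i + m) (nacomp g i m (π i x))
    rw [← ih]
    exact congrFun (hsemi (i + m)) _

lemma Real.log_natCast_le_add_of_le_mul {a b c : ℕ} (h : a ≤ b * c) :
    Real.log a ≤ Real.log b + Real.log c := by
  rcases Nat.eq_zero_or_pos a with rfl | ha
  · simpa using add_nonneg (Real.log_natCast_nonneg b) (Real.log_natCast_nonneg c)
  · obtain ⟨hb, hc⟩ := CanonicallyOrderedAdd.mul_pos.1 (ha.trans_le h)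
    rw [← Real.log_mul (by positivity) (by positivity)]
    exact Real.log_le_log (by positivity) (by exact_mod_cast h)

lemma Real.log_natCast_div_le_add_of_le_pow_mul {a b C m : ℕ} (h : a ≤ C ^ m * b) :
    Real.log a / m ≤ Real.log b / m + Real.log C := by
  rcases Nat.eq_zero_or_pos m with rfl | hm
  · simpa using Real.log_natCast_nonneg C
  · have hlog := Real.log_natCast_le_add_of_le_mul h
    rw [Nat.cast_pow, Real.log_pow] at hlog
    rw [div_add' _ _ _ (by positivity), div_le_div_iff_of_pos_right (by positivity)]
    linarith

theorem sepEnt_le_sepEnt_add_log_of_maxSep_le {X Y : Type*} [PseudoMetricSpace X]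
    [PseudoMetricSpace Y] {f : ℕ → X → X} {g : ℕ → Y → Y} {A : ℕ → ℕ} {Λ : Set X}
    {Λ' : Set Y} (C : ℕ)
    (h : ∀ ε > 0, ∃ δ > 0, ∀ m, maxSep f A m ε Λ ≤ C ^ m * maxSep g A m δ Λ') :
    sepEnt f A Λ ≤ sepEnt g A Λ' + Real.log C := by
  refine iSup_le fun ⟨ε, hε⟩ => ?_
  obtain ⟨δ, hδ, hsep⟩ := h ε hε
  set u : ℕ → EReal := fun m => ((Real.log (maxSep g A m δ Λ') / m : ℝ) : EReal)
  have hconst : limsup (fun _ : ℕ => (Real.log C : EReal)) atTop = Real.log C := limsup_const _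
  calc limsup (fun m : ℕ => ((Real.log (maxSep f A m ε Λ) / m : ℝ) : EReal)) atTop
      ≤ limsup (u + fun _ => (Real.log C : EReal)) atTop :=
        limsup_le_limsup (Eventually.of_forall fun m => by
          rw [Pi.add_apply, ← EReal.coe_add, EReal.coe_le_coe_iff]
          exact Real.log_natCast_div_le_add_of_le_pow_mul (hsep m))
    _ ≤ limsup u atTop + Real.log C := by
        simpa only [hconst] using EReal.limsup_add_le (u := u) (v := fun _ => (Real.log C : EReal))
          (f := atTop) (Or.inr (by simp [hconst])) (Or.inr (by simp [hconst]))
    _ ≤ sepEnt g A Λ' + Real.log C := by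
        gcongr
        exact le_iSup (fun p : {ε : ℝ // 0 < ε} =>
          limsup (fun m : ℕ => ((Real.log (maxSep g A m p Λ') / m : ℝ) : EReal)) atTop) ⟨δ, hδ⟩

section Semiconjugacy

variable {X Y : Type*} {f : ℕ → X → X} {g : ℕ → Y → Y} {π : ℕ → X → Y}

lemma maxSep_le_maxSep_of_semiconj [PseudoMetricSpace X] [CompactSpace X] [PseudoMetricSpace Y]
    (hπs : Function.Surjective (π 0)) (hsemi : ∀ i, π (i + 1) ∘ f i = g i ∘ π i) {ε δ : ℝ}
    (hδ : 0 < δ) (hπδ : ∀ i x x', dist x x' ≤ δ → dist (π i x) (π i x') ≤ ε) (A : ℕ → ℕ)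
    (m : ℕ) : maxSep g A m ε univ ≤ maxSep f A m δ univ := by
  classical
  set s := Function.surjInv hπs
  have horbit : ∀ (j : ℕ) (y : Y), π j (nacomp f 0 j (s y)) = nacomp g 0 j y := fun j y => by
    simpa [s, Function.surjInv_eq hπs y] using nacomp_semiconj hsemi 0 j (s y)
  refine maxSep_le fun E hE => ?_
  have hlift : IsSepSet f A m δ univ (E.image s) := by
    refine ⟨subset_univ _, ?_⟩
    simp only [Finset.mem_image]
    rintro _ ⟨y, hy, rfl⟩ _ ⟨y', hy', rfl⟩ hne
    obtain ⟨j, hj⟩ := hE.2 y hy y' hy' (fun h => hne (h ▸ rfl))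
    refine ⟨j, lt_of_not_ge fun hle => hj.not_ge ?_⟩
    simpa only [horbit] using hπδ (A j) _ _ hle
  calc E.card = (E.image s).card :=
        (Finset.card_image_of_injective E (Function.injective_surjInv hπs)).symm
    _ ≤ maxSep f A m δ univ := hlift.card_le_maxSep hδ

theorem sepEnt_le_sepEnt_of_semiconj [PseudoMetricSpace X] [CompactSpace X]
    [PseudoMetricSpace Y] (hπs : Function.Surjective (π 0)) (hπe : Equicontinuous π)
    (hsemi : ∀ i, π (i + 1) ∘ f i = g i ∘ π i) (A : ℕ → ℕ) :
    sepEnt g A univ ≤ sepEnt f A univ := by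
  have huec := CompactSpace.uniformEquicontinuous_of_equicontinuous hπe
  simpa using sepEnt_le_sepEnt_add_log_of_maxSep_le 1 fun ε hε => by
    obtain ⟨δ, hδ, hπδ⟩ := Metric.uniformEquicontinuous_iff.1 huec ε hε
    refine ⟨δ / 2, half_pos hδ, fun m => ?_⟩
    simpa using maxSep_le_maxSep_of_semiconj hπs hsemi (half_pos hδ)
      (fun i x x' h => (hπδ x x' (by linarith) i).le) A m

/-- Around each fibre, use that `φ` maps the compact complement of an `ε`-neighbourhood of the
fibre to a closed set missing the base point; a Lebesgue number of the resulting open cover of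
`range φ` makes this uniform. -/
lemma eventually_preimage_closedBall_subset_biUnion_ball [PseudoMetricSpace X] [CompactSpace X]
    [MetricSpace Y] {φ : X → Y} (hφ : Continuous φ) {n : ℕ}
    (hfib : ∀ y, ∃ F : Finset X, φ ⁻¹' {y} ⊆ F ∧ F.card ≤ n) {ε : ℝ} (hε : 0 < ε) :
    ∀ᶠ δ in 𝓝[>] 0, ∀ y, ∃ F : Finset X, F.card ≤ n ∧
      φ ⁻¹' closedBall y δ ⊆ ⋃ x ∈ F, ball x ε := by
  choose F hF hFn using hfib
  have hnbhd : ∀ y, ∃ V, IsOpen V ∧ y ∈ V ∧ φ ⁻¹' V ⊆ ⋃ x ∈ F y, ball x ε := fun y => by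
    set K := (⋃ x ∈ F y, ball x ε)ᶜ
    have hK : IsClosed (φ '' K) :=
      ((isOpen_biUnion fun x _ => isOpen_ball).isClosed_compl.isCompact.image hφ).isClosed
    refine ⟨(φ '' K)ᶜ, hK.isOpen_compl, ?_, fun x hx => ?_⟩
    · rintro ⟨x, hxK, hxy⟩
      exact hxK (mem_biUnion (Finset.mem_coe.2 (hF y hxy)) (mem_ball_self hε))
    · by_contra hxU
      exact hx ⟨x, hxU, rfl⟩
  choose V hVo hyV hVsub using hnbhd
  obtain ⟨r, hr, hleb⟩ := lebesgue_number_lemma_of_metric (isCompact_range hφ) hVo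
    fun y _ => mem_iUnion.2 ⟨y, hyV y⟩
  filter_upwards [Ioo_mem_nhdsGT (half_pos hr)] with δ hδ y
  rcases (φ ⁻¹' closedBall y δ).eq_empty_or_nonempty with hempty | ⟨x₀, hx₀⟩
  · exact ⟨∅, by simp, by simp [hempty]⟩
  obtain ⟨y₀, hy₀⟩ := hleb (φ x₀) (mem_range_self x₀)
  refine ⟨F y₀, hFn y₀, fun x hx => hVsub y₀ (hy₀ ?_)⟩
  have := dist_triangle_right (φ x) (φ x₀) y
  rw [mem_preimage, mem_closedBall] at hx hx₀
  rw [mem_ball]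
  linarith [hδ.2]

lemma maxSep_le_pow_mul_maxSep [PseudoMetricSpace X] [PseudoMetricSpace Y] [CompactSpace Y]
    (hsemi : ∀ i, π (i + 1) ∘ f i = g i ∘ π i) {n : ℕ} {ε δ : ℝ} (hδ : 0 < δ)
    (hcov : ∀ i y, ∃ F : Finset X, F.card ≤ n ∧ π i ⁻¹' closedBall y δ ⊆ ⋃ x ∈ F, ball x (ε / 2))
    (A : ℕ → ℕ) (m : ℕ) : maxSep f A m ε univ ≤ n ^ m * maxSep g A m δ univ := by
  classical
  choose F hFn hF using hcov
  obtain ⟨D, hDcard, hD⟩ :=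
    exists_card_eq_maxSep_forall_exists_dist_le (f := g) (A := A) (m := m) (Λ := univ) hδ
  set C := D.biUnion fun d => Fintype.piFinset fun j : Fin m => F (A j) (nacomp g 0 (A j) d)
  have hC : C.card ≤ n ^ m * maxSep g A m δ univ := calc
    C.card ≤ ∑ d ∈ D, (Fintype.piFinset fun j : Fin m => F (A j) (nacomp g 0 (A j) d)).card :=
        Finset.card_biUnion_le
    _ ≤ ∑ _d ∈ D, n ^ m := by
        gcongr with d
        rw [Fintype.card_piFinset]
        simpa using Finset.prod_le_pow_card Finset.univ
          (fun j : Fin m => (F (A j) (nacomp g 0 (A j) d)).card) n fun j _ => hFn _ _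
    _ = n ^ m * maxSep g A m δ univ := by rw [Finset.sum_const, smul_eq_mul, hDcard, mul_comm]
  refine maxSep_le fun E hE => (hE.card_le_of_forall_exists_dist_lt C fun x _ => ?_).trans hC
  obtain ⟨d, hdD, hd⟩ := hD (π 0 x) (mem_univ _)
  have hnear : ∀ j : Fin m, ∃ c ∈ F (A j) (nacomp g 0 (A j) d),
      dist (nacomp f 0 (A j) x) c < ε / 2 := fun j => by
    have hx : nacomp f 0 (A j) x ∈ π (A j) ⁻¹' closedBall (nacomp g 0 (A j) d) δ := by
      have := nacomp_semiconj hsemi 0 (A j) x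
      rw [zero_add] at this
      rw [mem_preimage, mem_closedBall, this]
      exact hd j
    simpa only [mem_iUnion₂, mem_ball, exists_prop, Finset.mem_coe] using hF _ _ hx
  choose c hcF hc using hnear
  exact ⟨c, Finset.mem_biUnion.2 ⟨d, hdD, Fintype.mem_piFinset.2 hcF⟩, hc⟩

theorem sepEnt_le_sepEnt_add_log_of_finite_to_one [PseudoMetricSpace X] [CompactSpace X]
    [MetricSpace Y] [CompactSpace Y] (hπc : ∀ i, Continuous (π i))
    (hsemi : ∀ i, π (i + 1) ∘ f i = g i ∘ π i) (hfin : (range π).Finite) {n : ℕ}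
    (hfib : ∀ i y, ∃ F : Finset X, π i ⁻¹' {y} ⊆ F ∧ F.card ≤ n) (A : ℕ → ℕ) :
    sepEnt f A univ ≤ sepEnt g A univ + Real.log n := by
  refine sepEnt_le_sepEnt_add_log_of_maxSep_le n fun ε hε => ?_
  have hsmall : ∀ᶠ δ in 𝓝[>] 0, ∀ ψ ∈ range π, ∀ y, ∃ F : Finset X, F.card ≤ n ∧
      ψ ⁻¹' closedBall y δ ⊆ ⋃ x ∈ F, ball x (ε / 2) := by
    refine hfin.eventually_all.2 ?_
    rintro _ ⟨i, rfl⟩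
    exact eventually_preimage_closedBall_subset_biUnion_ball (hπc i) (hfib i) (half_pos hε)
  obtain ⟨δ, hδ, hδpos⟩ := (hsmall.and self_mem_nhdsWithin).exists
  exact ⟨δ, hδpos, maxSep_le_pow_mul_maxSep hsemi hδpos (fun i => hδ _ (mem_range_self i)) A⟩

end Semiconjugacy

theorem sepEnt_finite_to_one_extension_general {X Y : Type*} [MetricSpace X] [CompactSpace X]
    [MetricSpace Y] [CompactSpace Y]
    (f : ℕ → X → X) (g : ℕ → Y → Y) (π : ℕ → X → Y) (hπs : ∀ i, Function.Surjective (π i))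
    (hπe : Equicontinuous π) (hsemi : ∀ i, (π (i + 1)) ∘ f i = g i ∘ π i)
    (k : ℕ) (φ : Fin k → X → Y) (hπφ : ∀ i, ∃ j, π i = φ j) (n : ℕ)
    (hfib : ∀ (j : Fin k) (y : Y), ∃ F : Finset X, φ j ⁻¹' {y} ⊆ ↑F ∧ F.card ≤ n)
    (A : ℕ → ℕ) :
    sepEnt g A univ ≤ sepEnt f A univ ∧
      sepEnt f A univ ≤ sepEnt g A univ + (Real.log (n * k) : EReal) := by
  have hfin : (range π).Finite := (finite_range φ).subset <| range_subset_iff.2 fun i =>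
    (hπφ i).elim fun j hj => ⟨j, hj.symm⟩
  have hπfib : ∀ i y, ∃ F : Finset X, π i ⁻¹' {y} ⊆ F ∧ F.card ≤ n := fun i => by
    obtain ⟨j, hj⟩ := hπφ i
    exact hj ▸ hfib j
  have hk : 0 < k := (hπφ 0).elim fun j _ => j.pos
  have hlog : Real.log n ≤ Real.log (n * k) := by
    rcases Nat.eq_zero_or_pos n with rfl | hn
    · simp
    · rw [Real.log_mul (by positivity) (by positivity)]
      linarith [Real.log_natCast_nonneg k]
  refine ⟨sepEnt_le_sepEnt_of_semiconj (hπs 0) hπe hsemi A, ?_⟩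
  calc sepEnt f A univ ≤ sepEnt g A univ + Real.log n :=
        sepEnt_le_sepEnt_add_log_of_finite_to_one hπe.continuous hsemi hfin hπfib A
    _ ≤ sepEnt g A univ + (Real.log (n * k) : EReal) :=
        add_le_add le_rfl (EReal.coe_le_coe_iff.2 hlog)

/-- Sequence-entropy estimate for a finite-to-one equi-semiconjugacy whose conjugating
maps come from a finite family `φ` with fibres of cardinality at most `n`. -/
theorem sepEnt_finite_to_one_extension {X Y : Type*} [MetricSpace X] [CompactSpace X]
    [MetricSpace Y] [CompactSpace Y]
    (f : ℕ → X → X) (hf : ∀ i, Continuous (f i))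
    (g : ℕ → Y → Y) (hg : ∀ i, Continuous (g i))
    (π : ℕ → X → Y) (hπc : ∀ i, Continuous (π i)) (hπs : ∀ i, Function.Surjective (π i))
    (hπe : Equicontinuous π) (hsemi : ∀ i, (π (i + 1)) ∘ f i = g i ∘ π i)
    (k : ℕ) (hk : 1 ≤ k) (φ : Fin k → X → Y) (hπφ : ∀ i, ∃ j, π i = φ j)
    (n : ℕ) (hn : 1 ≤ n)
    (hfib : ∀ (j : Fin k) (y : Y), ∃ F : Finset X, φ j ⁻¹' {y} ⊆ ↑F ∧ F.card ≤ n)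
    (A : ℕ → ℕ) (hA : StrictMono A) :
    sepEnt g A univ ≤ sepEnt f A univ ∧
      sepEnt f A univ ≤ sepEnt g A univ + (Real.log (n * k) : EReal) :=
  sepEnt_finite_to_one_extension_general f g π hπs hπe hsemi k φ hπφ n hfib A
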